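/- Let K be an integral domain, W ≤ S_d with |W| invertible in K, and χ : W → U(K) a character. For every free K-module E with finite basis let ι_E^{(d)} : [χ⁻¹]^d(E*) → ([χ]^d(E))* be the K-linear map sending y* to the linear form B(−, y*). Then ι_E^{(d)} is an isomorphism of K-modules, and it is natural in E: for every K-linear map u : E → F between free K-modules with finite bases, ᵗ([χ]^d(u)) ∘ ι_F^{(d)} = ι_E^{(d)} ∘ [χ⁻¹]^d(ᵗu), where ᵗ denotes the transpose (dual) of a linear map; equivalently, B_F([χ]^d(u)(x), y*) = B_E(x, [χ⁻¹]^d(ᵗu)(y*)) for all x ∈ [χ]^d(E) and y* ∈ [χ⁻¹]^d(F*). -/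

import Mathlib

noncomputable section

open scoped TensorProduct

/-- The action of a permutation `σ` of `Fin d` on the `d`-th tensor power
`T^d(E)`, determined by `σ • (x₁ ⊗ ⋯ ⊗ x_d) = x_{σ⁻¹(1)} ⊗ ⋯ ⊗ x_{σ⁻¹(d)}`. -/
def permAct (K : Type*) [CommRing K] (E : Type*) [AddCommGroup E] [Module K E]
    (d : ℕ) (σ : Equiv.Perm (Fin d)) :
    (⨂[K] (_ : Fin d), E) ≃ₗ[K] ⨂[K] (_ : Fin d), E :=
  PiTensorProduct.reindex K (fun _ : Fin d => E) σ

/-- The submodule `_{χ⁻¹}T^d(E)` of `T^d(E)` generated by the elements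
`χ⁻¹(σ) z − σ z` for `σ ∈ W`; the quotient by it is the `d`-th
semi-symmetric power `[χ]^d(E)` of weight `χ`. -/
def chiKer {K : Type*} [CommRing K] (E : Type*) [AddCommGroup E] [Module K E]
    {d : ℕ} (W : Subgroup (Equiv.Perm (Fin d))) (χ : W →* Kˣ) :
    Submodule K (⨂[K] (_ : Fin d), E) :=
  Submodule.span K {w | ∃ (σ : W) (z : ⨂[K] (_ : Fin d), E),
    w = (((χ σ)⁻¹ : Kˣ) : K) • z - permAct K E d (σ : Equiv.Perm (Fin d)) z}

/-- The `d`-th semi-symmetric power `[χ]^d(E) = T^d(E)/_{χ⁻¹}T^d(E)`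
of weight `χ` of the `K`-module `E`. -/
abbrev SemiPow {K : Type*} [CommRing K] (E : Type*) [AddCommGroup E] [Module K E]
    {d : ℕ} (W : Subgroup (Equiv.Perm (Fin d))) (χ : W →* Kˣ) :=
  (⨂[K] (_ : Fin d), E) ⧸ chiKer E W χ

/-- The decomposable `d-χ`-vector `x₁ χ ⋯ χ x_d`. -/
def semiMk {K : Type*} [CommRing K] {E : Type*} [AddCommGroup E] [Module K E]
    {d : ℕ} (W : Subgroup (Equiv.Perm (Fin d))) (χ : W →* Kˣ)
    (x : Fin d → E) : SemiPow E W χ :=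
  Submodule.Quotient.mk (PiTensorProduct.tprod K x)


/-- The generalized Schur function
`d_χ^W(A) = Σ_{σ ∈ W} χ(σ) · a_{σ⁻¹(1),1} ⋯ a_{σ⁻¹(d),d}`. -/
def schurFn {K : Type*} [CommRing K] {d : ℕ} (W : Subgroup (Equiv.Perm (Fin d)))
    (χ : W →* Kˣ) (A : Matrix (Fin d) (Fin d) K) : K :=
  ∑ᶠ σ : W, ((χ σ : Kˣ) : K) * ∏ t : Fin d, A (((σ : Equiv.Perm (Fin d)))⁻¹ t) t

/-- Strict lexicographic comparison of functions. -/
def lexLT {ι : Type*} [LT ι] {α : Type*} [LT α] (f g : ι → α) : Prop :=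
  Pi.Lex (· < ·) (fun {_} => (· < ·)) f g

/-- The set `J(χ,n,d)` of multi-indices `i ∈ [1,n]^d` that are
lexicographically minimal in their `W`-orbit (for the action
`(σ i)_t = i_{σ⁻¹(t)}`) and on whose stabilizer `W_i` the character `χ`
is trivial. -/
def Jset {K : Type*} [CommRing K] {d : ℕ} (W : Subgroup (Equiv.Perm (Fin d)))
    (χ : W →* Kˣ) (n : ℕ) : Set (Fin d → Fin n) :=
  {i | (∀ σ : W, i ∘ ⇑(((σ : Equiv.Perm (Fin d)))⁻¹) = i → χ σ = 1) ∧
       (∀ σ : W, ¬ lexLT (i ∘ ⇑(((σ : Equiv.Perm (Fin d)))⁻¹)) i)}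

/-- The order of the stabilizer `W_i` of a multi-index `i`. -/
def stabCard {d : ℕ} (W : Subgroup (Equiv.Perm (Fin d))) {n : ℕ}
    (i : Fin d → Fin n) : ℕ :=
  Nat.card {σ : W // i ∘ ⇑(((σ : Equiv.Perm (Fin d)))⁻¹) = i}

lemma map_permAct {K : Type*} [CommRing K] {E F : Type*}
    [AddCommGroup E] [Module K E] [AddCommGroup F] [Module K F]
    {d : ℕ} (u : E →ₗ[K] F) (σ : Equiv.Perm (Fin d)) (z : ⨂[K] (_ : Fin d), E) :
    PiTensorProduct.map (fun _ => u) (permAct K E d σ z)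
      = permAct K F d σ (PiTensorProduct.map (fun _ => u) z) := by
  induction z using PiTensorProduct.induction_on with
  | smul_tprod c f =>
      simp [permAct, PiTensorProduct.reindex_tprod, PiTensorProduct.map_tprod,
        Function.comp_def]
  | add x y hx hy => simp [map_add, hx, hy]

/-- The `K`-linear map `[χ]^d(u) : [χ]^d(E) → [χ]^d(F)` induced by a
`K`-linear map `u : E → F`. -/
def semiMap {K : Type*} [CommRing K] {E F : Type*}
    [AddCommGroup E] [Module K E] [AddCommGroup F] [Module K F]
    {d : ℕ} (W : Subgroup (Equiv.Perm (Fin d))) (χ : W →* Kˣ)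
    (u : E →ₗ[K] F) : SemiPow E W χ →ₗ[K] SemiPow F W χ :=
  Submodule.mapQ _ _ (PiTensorProduct.map fun _ => u) (by
    rw [chiKer, Submodule.span_le]
    rintro w ⟨σ, z, rfl⟩
    simp only [SetLike.mem_coe, Submodule.mem_comap, map_sub, map_smul]
    rw [map_permAct]
    exact Submodule.subset_span ⟨σ, _, rfl⟩)


/-!
Everything is pulled back to tensor powers, where `T^d(E*) ≅ T^d(E)*` (`dualDistrib`, since `E` has
a finite basis). With the symmetrizer `S_χ = ∑_{σ ∈ W} χ(σ) σ` and the quotient maps `π`, `π'`,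
the form is `B(π z, π' w) = ⟨w, S_χ z⟩`, and `S_χ` is adjoint to `S_{χ⁻¹}`. On the quotient,
`S_χ` acts as multiplication by `|W|`, a unit: so `S_{χ⁻¹} w = 0` forces `π' w = 0`
(injectivity), and a linear form `f` with `f ∘ π = ⟨w₀, -⟩` equals `B(-, |W|⁻¹ π' w₀)`
(surjectivity). Naturality holds because `S_χ` commutes with `u^{⊗d}`, whose transpose is
`(ᵗu)^{⊗d}`.
-/

open PiTensorProduct

section Symmetrizer

variable {K : Type*} [CommRing K] {E F : Type*} [AddCommGroup E] [Module K E]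
  [AddCommGroup F] [Module K F] {d : ℕ} (W : Subgroup (Equiv.Perm (Fin d))) (χ : W →* Kˣ)

def symmetrizer : (⨂[K] (_ : Fin d), E) →ₗ[K] ⨂[K] (_ : Fin d), E :=
  ∑ᶠ σ : W, ((χ σ : Kˣ) : K) • (permAct K E d σ).toLinearMap

lemma symmetrizer_apply [Fintype W] (z : ⨂[K] (_ : Fin d), E) :
    symmetrizer W χ z = ∑ σ : W, ((χ σ : Kˣ) : K) • permAct K E d σ z := by
  rw [symmetrizer, finsum_eq_sum_of_fintype, LinearMap.sum_apply]
  rfl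

lemma permAct_tprod (σ : Equiv.Perm (Fin d)) (x : Fin d → E) :
    permAct K E d σ (tprod K x) = tprod K fun t => x (σ⁻¹ t) :=
  reindex_tprod σ x

lemma mk_permAct (σ : W) (z : ⨂[K] (_ : Fin d), E) :
    (Submodule.Quotient.mk (permAct K E d σ z) : SemiPow E W χ)
      = (((χ σ)⁻¹ : Kˣ) : K) • Submodule.Quotient.mk z := by
  have hmem : (((χ σ)⁻¹ : Kˣ) : K) • z - permAct K E d σ z ∈ chiKer E W χ :=
    Submodule.subset_span ⟨σ, z, rfl⟩
  simpa using ((Submodule.Quotient.eq _).2 hmem).symm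

lemma mk_symmetrizer (z : ⨂[K] (_ : Fin d), E) :
    (Submodule.Quotient.mk (symmetrizer W χ z) : SemiPow E W χ)
      = (Nat.card W : K) • Submodule.Quotient.mk z := by
  classical
  rw [symmetrizer_apply, ← Submodule.mkQ_apply, map_sum]
  simp [mk_permAct, smul_smul, Nat.card_eq_fintype_card, Nat.cast_smul_eq_nsmul]

lemma mem_chiKer_of_symmetrizer_eq_zero (hcard : IsUnit (Nat.card W : K))
    {z : ⨂[K] (_ : Fin d), E} (hz : symmetrizer W χ z = 0) : z ∈ chiKer E W χ := by
  have h := mk_symmetrizer W χ z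
  rwa [hz, Submodule.Quotient.mk_zero, eq_comm, hcard.smul_eq_zero,
    Submodule.Quotient.mk_eq_zero] at h

lemma dualDistrib_permAct (σ : Equiv.Perm (Fin d)) (w : ⨂[K] (_ : Fin d), Module.Dual K E)
    (z : ⨂[K] (_ : Fin d), E) :
    dualDistrib w (permAct K E d σ z) = dualDistrib (permAct K (Module.Dual K E) d σ⁻¹ w) z := by
  induction z using PiTensorProduct.induction_on with
  | smul_tprod c x =>
    induction w using PiTensorProduct.induction_on with
    | smul_tprod c' y =>
      simp only [map_smul, LinearMap.smul_apply, permAct_tprod, dualDistrib_apply]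
      congr 2
      exact (Equiv.prod_comp σ _).symm.trans (by simp [Equiv.Perm.inv_def])
    | add w₁ w₂ h₁ h₂ => simp only [map_add, LinearMap.add_apply, h₁, h₂]
  | add z₁ z₂ h₁ h₂ => simp only [map_add, h₁, h₂]

lemma dualDistrib_symmetrizer (w : ⨂[K] (_ : Fin d), Module.Dual K E)
    (z : ⨂[K] (_ : Fin d), E) :
    dualDistrib w (symmetrizer W χ z) = dualDistrib (symmetrizer W χ⁻¹ w) z := by
  classical
  simp only [symmetrizer_apply, map_sum, map_smul, LinearMap.sum_apply, LinearMap.smul_apply,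
    dualDistrib_permAct]
  exact Fintype.sum_equiv (Equiv.inv W) _ _ fun σ => by simp

lemma map_symmetrizer (u : E →ₗ[K] F) (z : ⨂[K] (_ : Fin d), E) :
    map (fun _ => u) (symmetrizer W χ z) = symmetrizer W χ (map (fun _ => u) z) := by
  classical
  simp [symmetrizer_apply, map_permAct]

lemma dualDistrib_map (u : E →ₗ[K] F) (w : ⨂[K] (_ : Fin d), Module.Dual K F)
    (z : ⨂[K] (_ : Fin d), E) :
    dualDistrib w (map (fun _ => u) z) = dualDistrib (map (fun _ => u.dualMap) w) z := by
  induction z using PiTensorProduct.induction_on with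
  | smul_tprod c x =>
    induction w using PiTensorProduct.induction_on with
    | smul_tprod c' y => simp [map_tprod]
    | add w₁ w₂ h₁ h₂ => simp only [map_add, LinearMap.add_apply, h₁, h₂]
  | add z₁ z₂ h₁ h₂ => simp only [map_add, h₁, h₂]

end Symmetrizer

lemma dualDistrib_bijective {K : Type*} [CommRing K] {E : Type*} [AddCommGroup E] [Module K E]
    {ι : Type*} [Finite ι] {d : ℕ} (b : Module.Basis ι K E) :
    Function.Bijective (dualDistrib :
      (⨂[K] (_ : Fin d), Module.Dual K E) →ₗ[K] Module.Dual K (⨂[K] (_ : Fin d), E)) :=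
  (dualDistribEquivOfBasis fun _ => b).bijective

def IsSchurPairing {K : Type*} [CommRing K] {E : Type*} [AddCommGroup E] [Module K E] {d : ℕ}
    (W : Subgroup (Equiv.Perm (Fin d))) (χ : W →* Kˣ)
    (B : SemiPow E W χ →ₗ[K] SemiPow (Module.Dual K E) W χ⁻¹ →ₗ[K] K) : Prop :=
  ∀ (x : Fin d → E) (y : Fin d → Module.Dual K E),
    B (semiMk W χ x) (semiMk W χ⁻¹ y) = schurFn W χ (Matrix.of fun i j => y j (x i))

namespace IsSchurPairing

variable {K : Type*} [CommRing K] {E F : Type*} [AddCommGroup E] [Module K E]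
  [AddCommGroup F] [Module K F] {d : ℕ} {W : Subgroup (Equiv.Perm (Fin d))} {χ : W →* Kˣ}
  {BE : SemiPow E W χ →ₗ[K] SemiPow (Module.Dual K E) W χ⁻¹ →ₗ[K] K}

lemma apply_mk_mk (hB : IsSchurPairing W χ BE) (z : ⨂[K] (_ : Fin d), E)
    (w : ⨂[K] (_ : Fin d), Module.Dual K E) :
    BE (Submodule.Quotient.mk z) (Submodule.Quotient.mk w) = dualDistrib w (symmetrizer W χ z) := by
  classical
  induction z using PiTensorProduct.induction_on with
  | smul_tprod c x =>
    induction w using PiTensorProduct.induction_on with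
    | smul_tprod c' y =>
      have hxy := hB x y
      rw [semiMk, semiMk, schurFn, finsum_eq_sum_of_fintype] at hxy
      simp only [Matrix.of_apply] at hxy
      simp only [Submodule.Quotient.mk_smul, map_smul, LinearMap.smul_apply, hxy,
        symmetrizer_apply, map_sum, permAct_tprod, dualDistrib_apply, smul_eq_mul,
        Finset.mul_sum]
      exact Finset.sum_congr rfl fun _ _ => by ring
    | add w₁ w₂ h₁ h₂ =>
      simp only [Submodule.Quotient.mk_add, map_add, LinearMap.add_apply, h₁, h₂]
  | add z₁ z₂ h₁ h₂ =>
    simp only [Submodule.Quotient.mk_add, map_add, LinearMap.add_apply, h₁, h₂]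

lemma flip_injective (hB : IsSchurPairing W χ BE) (hcard : IsUnit (Nat.card W : K))
    {ι : Type*} [Finite ι] (b : Module.Basis ι K E) : Function.Injective BE.flip := by
  refine (injective_iff_map_eq_zero _).2 fun y hy => ?_
  obtain ⟨w, rfl⟩ := Submodule.Quotient.mk_surjective _ y
  have hsym : symmetrizer W χ⁻¹ w = 0 := (dualDistrib_bijective b).injective <|
    LinearMap.ext fun z => by
      rw [← dualDistrib_symmetrizer, ← hB.apply_mk_mk, ← LinearMap.flip_apply, hy, map_zero]
      rfl
  exact (Submodule.Quotient.mk_eq_zero _).2 (mem_chiKer_of_symmetrizer_eq_zero W χ⁻¹ hcard hsym)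

lemma flip_surjective (hB : IsSchurPairing W χ BE) (hcard : IsUnit (Nat.card W : K))
    {ι : Type*} [Finite ι] (b : Module.Basis ι K E) : Function.Surjective BE.flip := by
  intro f
  obtain ⟨w, hw⟩ := (dualDistrib_bijective b).surjective (f ∘ₗ (chiKer E W χ).mkQ)
  refine ⟨Submodule.Quotient.mk (((hcard.unit⁻¹ : Kˣ) : K) • w), LinearMap.ext fun x => ?_⟩
  obtain ⟨z, rfl⟩ := Submodule.Quotient.mk_surjective _ x
  calc BE.flip (Submodule.Quotient.mk (((hcard.unit⁻¹ : Kˣ) : K) • w)) (Submodule.Quotient.mk z)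
      = ((hcard.unit⁻¹ : Kˣ) : K) * f (Submodule.Quotient.mk (symmetrizer W χ z)) := by
        simp [hB.apply_mk_mk, hw]
    _ = f (Submodule.Quotient.mk z) := by
        rw [mk_symmetrizer, map_smul, smul_eq_mul, ← mul_assoc, hcard.val_inv_mul, one_mul]

lemma flip_bijective (hB : IsSchurPairing W χ BE) (hcard : IsUnit (Nat.card W : K))
    {ι : Type*} [Finite ι] (b : Module.Basis ι K E) : Function.Bijective BE.flip :=
  ⟨hB.flip_injective hcard b, hB.flip_surjective hcard b⟩

lemma apply_semiMap {BF : SemiPow F W χ →ₗ[K] SemiPow (Module.Dual K F) W χ⁻¹ →ₗ[K] K}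
    (hBE : IsSchurPairing W χ BE) (hBF : IsSchurPairing W χ BF) (u : E →ₗ[K] F)
    (x : SemiPow E W χ) (y : SemiPow (Module.Dual K F) W χ⁻¹) :
    BF (semiMap W χ u x) y = BE x (semiMap W χ⁻¹ u.dualMap y) := by
  obtain ⟨z, rfl⟩ := Submodule.Quotient.mk_surjective _ x
  obtain ⟨w, rfl⟩ := Submodule.Quotient.mk_surjective _ y
  calc BF (semiMap W χ u (Submodule.Quotient.mk z)) (Submodule.Quotient.mk w)
      = dualDistrib w (map (fun _ => u) (symmetrizer W χ z)) := by
        rw [map_symmetrizer, ← hBF.apply_mk_mk]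
        rfl
    _ = BE (Submodule.Quotient.mk z) (semiMap W χ⁻¹ u.dualMap (Submodule.Quotient.mk w)) := by
        rw [dualDistrib_map, ← hBE.apply_mk_mk]
        rfl

end IsSchurPairing

theorem semiPow_duality_natural_general {K : Type*} [CommRing K]
    {E F : Type*} [AddCommGroup E] [Module K E] [AddCommGroup F] [Module K F]
    {d : ℕ} (W : Subgroup (Equiv.Perm (Fin d))) (χ : W →* Kˣ)
    (hcard : IsUnit ((Nat.card W : K)))
    {n m : ℕ} (bE : Module.Basis (Fin n) K E) (bF : Module.Basis (Fin m) K F)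
    (BE : SemiPow E W χ →ₗ[K] SemiPow (Module.Dual K E) W χ⁻¹ →ₗ[K] K)
    (hBE : ∀ (x : Fin d → E) (y : Fin d → Module.Dual K E),
      BE (semiMk W χ x) (semiMk W χ⁻¹ y) = schurFn W χ (Matrix.of fun i j => y j (x i)))
    (BF : SemiPow F W χ →ₗ[K] SemiPow (Module.Dual K F) W χ⁻¹ →ₗ[K] K)
    (hBF : ∀ (x : Fin d → F) (y : Fin d → Module.Dual K F),
      BF (semiMk W χ x) (semiMk W χ⁻¹ y) = schurFn W χ (Matrix.of fun i j => y j (x i)))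
    (u : E →ₗ[K] F) :
    Function.Bijective ⇑BE.flip ∧ Function.Bijective ⇑BF.flip ∧
    (∀ (x : SemiPow E W χ) (y : SemiPow (Module.Dual K F) W χ⁻¹),
      BF (semiMap W χ u x) y = BE x (semiMap W χ⁻¹ u.dualMap y)) :=
  ⟨IsSchurPairing.flip_bijective hBE hcard bE, IsSchurPairing.flip_bijective hBF hcard bF,
    IsSchurPairing.apply_semiMap hBE hBF u⟩

/-- Theorem III.1 (ii) and Corollary III.9. The map
`ι_E : [χ⁻¹]^d(E*) → ([χ]^d(E))*`, `y* ↦ B(−, y*)`, is an isomorphism of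
`K`-modules, natural in `E`: for every `u : E → F` one has
`ᵗ([χ]^d(u)) ∘ ι_F = ι_E ∘ [χ⁻¹]^d(ᵗu)`, i.e.
`B_F([χ]^d(u)(x), y*) = B_E(x, [χ⁻¹]^d(ᵗu)(y*))`. -/
theorem semiPow_duality_natural {K : Type*} [CommRing K] [IsDomain K]
    {E F : Type*} [AddCommGroup E] [Module K E] [AddCommGroup F] [Module K F]
    {d : ℕ} (W : Subgroup (Equiv.Perm (Fin d))) (χ : W →* Kˣ)
    (hcard : IsUnit ((Nat.card W : K)))
    {n m : ℕ} (bE : Module.Basis (Fin n) K E) (bF : Module.Basis (Fin m) K F)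
    (BE : SemiPow E W χ →ₗ[K] SemiPow (Module.Dual K E) W χ⁻¹ →ₗ[K] K)
    (hBE : ∀ (x : Fin d → E) (y : Fin d → Module.Dual K E),
      BE (semiMk W χ x) (semiMk W χ⁻¹ y) = schurFn W χ (Matrix.of fun i j => y j (x i)))
    (BF : SemiPow F W χ →ₗ[K] SemiPow (Module.Dual K F) W χ⁻¹ →ₗ[K] K)
    (hBF : ∀ (x : Fin d → F) (y : Fin d → Module.Dual K F),
      BF (semiMk W χ x) (semiMk W χ⁻¹ y) = schurFn W χ (Matrix.of fun i j => y j (x i)))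
    (u : E →ₗ[K] F) :
    Function.Bijective ⇑BE.flip ∧ Function.Bijective ⇑BF.flip ∧
    (∀ (x : SemiPow E W χ) (y : SemiPow (Module.Dual K F) W χ⁻¹),
      BF (semiMap W χ u x) y = BE x (semiMap W χ⁻¹ u.dualMap y)) :=
  semiPow_duality_natural_general W χ hcard bE bF BE hBE BF hBF u
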